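/- arXiv:2012.01358 — 6 statements merged into one kernel-verified Lean document; each statement's English description precedes it below -/
import Mathlib

section
/- Let Γ be a numerical semigroup with multiplicity m, and write the Apéry set Ap(Γ, m) = {w₀ = 0 < w₁ < ... < w_{m−1}}. For each j = 1, ..., m−1, the number of indices α ∈ ℕ such that the interval I_α = [αm, (α+1)m − 1] contains exactly j elements of Γ equals ⌊w_j/m⌋ − ⌊w_{j−1}/m⌋. -/
/-- A numerical semigroup: a cofinite additive submonoid of ℕ. -/
def IsNumSgp (S : Set ℕ) : Prop :=
  0 ∈ S ∧ (∀ a ∈ S, ∀ b ∈ S, a + b ∈ S) ∧ Sᶜ.Finite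

/-- Conductor: least `n` such that every `x ≥ n` lies in `S` (equals `F(S)+1`, and `0` for `ℕ`). -/
noncomputable def nsConductor (S : Set ℕ) : ℕ :=
  sInf {n : ℕ | ∀ x, n ≤ x → x ∈ S}

/-- Delta invariant: number of elements of `S` strictly below the nsConductor. -/
noncomputable def nsDelta (S : Set ℕ) : ℕ :=
  {x | x ∈ S ∧ x < nsConductor S}.ncard

/-- Multiplicity: least nonzero element of `S`. -/
noncomputable def mult (S : Set ℕ) : ℕ := sInf (S \ {0})

/-- Apéry set of `S` with respect to `s`: elements `w ∈ S` with `w - s ∉ S`. -/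
def apery (S : Set ℕ) (s : ℕ) : Set ℕ :=
  {w | w ∈ S ∧ ∀ v ∈ S, v + s ≠ w}

/-- The type of `S`: number of maximal elements of `Ap(S, m) \ {0}` for the order
`s ⪯ t ↔ t - s ∈ S`. -/
noncomputable def typ (S : Set ℕ) : ℕ :=
  {w | w ∈ apery S (mult S) ∧ w ≠ 0 ∧
    ∀ w' ∈ apery S (mult S), w' ≠ 0 → (∃ u ∈ S, w + u = w') → w' = w}.ncard

/-- `A` is a minimal system of generators of `S`. -/
def MinGens (S : Set ℕ) (A : Finset ℕ) : Prop :=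
  (AddSubmonoid.closure (A : Set ℕ) : Set ℕ) = S ∧
    ∀ B ⊆ A, (AddSubmonoid.closure (B : Set ℕ) : Set ℕ) = S → B = A

/-- The Γ-semimodule generated by `{0, g}`. -/
def semimod (S : Set ℕ) (g : ℕ) : Set ℕ := S ∪ (fun x => g + x) '' S

theorem stmt1 (S : Set ℕ) (hS : IsNumSgp S) (hne : S ≠ Set.univ)
    (m : ℕ) (hm : m = mult S)
    (w : ℕ → ℕ) (hmono : ∀ i j, i < j → j < m → w i < w j)
    (himg : apery S m = w '' Set.Iio m) :
    ∀ j, 1 ≤ j → j < m →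
      {α : ℕ | (S ∩ Set.Ico (α * m) ((α + 1) * m)).ncard = j}.ncard
        = w j / m - w (j - 1) / m := by
  intro j hj1 hjm
  obtain ⟨h0S, hadd, hcof⟩ := hS
  have hSinf : S.Infinite := by
    have := hcof.infinite_compl
    simpa using this
  have hne0 : (S \ {0}).Nonempty := (hSinf.diff (Set.finite_singleton 0)).nonempty
  have hmem : m ∈ S \ {0} := by rw [hm, mult]; exact Nat.sInf_mem hne0
  have hmS : m ∈ S := hmem.1
  have hm0 : 0 < m := Nat.pos_of_ne_zero (by simpa using hmem.2)
  -- adding multiples of m stays in S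
  have hstep : ∀ (k x : ℕ), x ∈ S → x + k * m ∈ S := by
    intro k
    induction k with
    | zero => simpa
    | succ n ih =>
      intro x hx
      have := hadd _ (ih x hx) _ hmS
      simpa [Nat.succ_mul, add_assoc] using this
  have hw_ap : ∀ i, i < m → w i ∈ apery S m := by
    intro i hi; rw [himg]; exact ⟨i, hi, rfl⟩
  have hwS : ∀ i, i < m → w i ∈ S := fun i hi => (hw_ap i hi).1
  -- every element of S lies above an apery element in its class
  have hexists : ∀ x, x ∈ S → ∃ i, i < m ∧ w i ≤ x ∧ x % m = w i % m := by
    intro x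
    induction x using Nat.strong_induction_on with
    | _ x ih =>
      intro hx
      by_cases hap : x ∈ apery S m
      · rw [himg] at hap
        obtain ⟨i, hi, rfl⟩ := hap
        exact ⟨i, hi, le_refl _, rfl⟩
      · have hnv : ¬ (∀ v ∈ S, v + m ≠ x) := fun h => hap ⟨hx, h⟩
        push_neg at hnv
        obtain ⟨v, hv, hvx⟩ := hnv
        have hvlt : v < x := by omega
        obtain ⟨i, hi, hle, hmod⟩ := ih v hvlt hv
        refine ⟨i, hi, by omega, ?_⟩
        have : x % m = v % m := by
          rw [← hvx]; exact Nat.add_mod_right v m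
        rw [this, hmod]
  -- conversely, anything above an apery element in its class is in S
  have hge : ∀ i, i < m → ∀ x, w i ≤ x → x % m = w i % m → x ∈ S := by
    intro i hi x hle hmod
    have hdvd : m ∣ x - w i := (Nat.modEq_iff_dvd' hle).mp hmod.symm
    obtain ⟨k, hk⟩ := hdvd
    rw [mul_comm] at hk
    have hx : x = w i + k * m := by omega
    rw [hx]
    exact hstep k (w i) (hwS i hi)
  -- apery elements have distinct residues
  have hinj : ∀ i, i < m → ∀ i', i' < m → w i % m = w i' % m → i = i' := by
    have aux : ∀ i, i < m → ∀ i', i' < m → w i < w i' → w i % m ≠ w i' % m := by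
      intro i hi i' hi' hlt heq
      have hdvd : m ∣ w i' - w i := (Nat.modEq_iff_dvd' (le_of_lt hlt)).mp heq
      obtain ⟨k, hk⟩ := hdvd
      rw [mul_comm] at hk
      have hkpos : k ≠ 0 := by
        rintro rfl
        simp at hk
        omega
      obtain ⟨t, rfl⟩ : ∃ t, k = t + 1 := ⟨k - 1, by omega⟩
      rw [add_one_mul] at hk
      have hv : w i + t * m ∈ S := hstep t (w i) (hwS i hi)
      have heq' : (w i + t * m) + m = w i' := by omega
      exact (hw_ap i' hi').2 _ hv heq'
    intro i hi i' hi' heq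
    by_contra hne'
    rcases Nat.lt_or_ge i i' with h | h
    · exact aux i hi i' hi' (hmono i i' h hi') heq
    · have h' : i' < i := by omega
      exact aux i' hi' i hi (hmono i' i h' hi) heq.symm
  -- the count of S in each window
  have hcount : ∀ α : ℕ, (S ∩ Set.Ico (α * m) ((α + 1) * m)).ncard
      = ((Finset.range m).filter (fun i => w i / m ≤ α)).card := by
    intro α
    have hseteq : S ∩ Set.Ico (α * m) ((α + 1) * m)
        = ↑(((Finset.range m).filter (fun i => w i / m ≤ α)).image
            (fun i => α * m + w i % m)) := by
      ext x
      simp only [Set.mem_inter_iff, Set.mem_Ico, Finset.coe_image, Set.mem_image,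
        Finset.mem_coe, Finset.mem_filter, Finset.mem_range]
      constructor
      · rintro ⟨hxS, hlo, hhi⟩
        obtain ⟨i, hi, hle, hmod⟩ := hexists x hxS
        have hdiv : x / m = α := Nat.div_eq_of_lt_le hlo hhi
        refine ⟨i, ⟨hi, ?_⟩, ?_⟩
        · have := Nat.div_le_div_right (c := m) hle
          omega
        · have hdm := Nat.div_add_mod x m
          rw [hdiv] at hdm
          have hcm : m * α = α * m := Nat.mul_comm _ _
          rw [← hmod]
          omega
      · rintro ⟨i, ⟨hi, hdiv⟩, rfl⟩
        have hrlt : w i % m < m := Nat.mod_lt _ hm0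
        have hdm := Nat.div_add_mod (w i) m
        have hle : w i ≤ α * m + w i % m := by
          have h1 : m * (w i / m) ≤ m * α := Nat.mul_le_mul_left m hdiv
          have hcm : m * α = α * m := Nat.mul_comm _ _
          omega
        have hmod : (α * m + w i % m) % m = w i % m := by
          rw [add_comm, Nat.add_mul_mod_self_right]
          exact Nat.mod_eq_of_lt hrlt
        have h1m : (α + 1) * m = α * m + m := by ring
        refine ⟨hge i hi _ hle hmod, by omega, by omega⟩
    rw [hseteq, Set.ncard_coe_finset]
    apply Finset.card_image_of_injOn
    intro a ha b hb hab
    simp only [Finset.mem_coe, Finset.mem_filter, Finset.mem_range] at ha hb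
    have hab' : α * m + w a % m = α * m + w b % m := hab
    have : w a % m = w b % m := by omega
    exact hinj a ha.1 b hb.1 this
  -- monotonicity of i ↦ w i / m on range m
  have hqmono : ∀ i i', i ≤ i' → i' < m → w i / m ≤ w i' / m := by
    intro i i' hle hlt
    rcases Nat.eq_or_lt_of_le hle with rfl | h
    · exact le_refl _
    · exact Nat.div_le_div_right (le_of_lt (hmono i i' h hlt))
  -- characterize when the count equals j
  have hchar : ∀ α : ℕ, ((Finset.range m).filter (fun i => w i / m ≤ α)).card = j
      ↔ (w (j - 1) / m ≤ α ∧ α < w j / m) := by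
    intro α
    constructor
    · intro hcard
      constructor
      · by_contra hcon
        push_neg at hcon
        have hsub : (Finset.range m).filter (fun i => w i / m ≤ α) ⊆ Finset.range (j - 1) := by
          intro i hi
          simp only [Finset.mem_filter, Finset.mem_range] at hi ⊢
          by_contra hge'
          push_neg at hge'
          have := hqmono (j - 1) i hge' hi.1
          omega
        have := Finset.card_le_card hsub
        rw [hcard, Finset.card_range] at this
        omega
      · by_contra hcon
        push_neg at hcon
        have hsub : Finset.range (j + 1) ⊆ (Finset.range m).filter (fun i => w i / m ≤ α) := by
          intro i hi
          simp only [Finset.mem_range] at hi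
          simp only [Finset.mem_filter, Finset.mem_range]
          have hile : i ≤ j := by omega
          have := hqmono i j hile hjm
          exact ⟨by omega, by omega⟩
        have := Finset.card_le_card hsub
        rw [hcard, Finset.card_range] at this
        omega
    · rintro ⟨h1, h2⟩
      have : (Finset.range m).filter (fun i => w i / m ≤ α) = Finset.range j := by
        ext i
        simp only [Finset.mem_filter, Finset.mem_range]
        constructor
        · rintro ⟨him, hia⟩
          by_contra hge'
          push_neg at hge'
          have := hqmono j i hge' him
          omega
        · intro hij
          have hile : i ≤ j - 1 := by omega
          have := hqmono i (j - 1) hile (by omega)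
          exact ⟨by omega, by omega⟩
      rw [this, Finset.card_range]
  have : {α : ℕ | (S ∩ Set.Ico (α * m) ((α + 1) * m)).ncard = j}
      = Set.Ico (w (j - 1) / m) (w j / m) := by
    ext α
    simp only [Set.mem_setOf_eq, Set.mem_Ico, hcount α, hchar α]
  rw [this, ← Finset.coe_Ico, Set.ncard_coe_finset, Nat.card_Ico]
end

section
/- Let Γ be a numerical semigroup with multiplicity m > 1. Then m·δ(Γ) = c(Γ) if and only if Γ = ⟨m, qm+1, qm+2, ..., qm+(m−1)⟩ for some integer q > 0, i.e., Γ = {0, m, 2m, ..., qm} ∪ {n ∈ ℕ : n ≥ qm}. -/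
/-!
Every multiple of `m` lies in `Γ`. If `m δ = c`, the `δ` multiples `0, m, …, (δ - 1) m` lie below
`c`, so they are all the `δ` elements of `Γ` below `c`, and `Γ = W_{m,δ}`. Conversely `W_{m,q}` has
conductor `q m` (as `m ∤ q m - 1`) and its elements below `q m` are the `q` multiples
`0, m, …, (q - 1) m`.
-/

open Set

def wSemigroup (m q : ℕ) : Set ℕ :=
  {n : ℕ | ∃ i ≤ q, n = i * m} ∪ {n : ℕ | q * m ≤ n}

lemma Set.eq_of_inter_Iio_eq_of_Ici_subset {α : Type*} [LinearOrder α] {s t : Set α} {a : α}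
    (h : s ∩ Iio a = t ∩ Iio a) (hs : Ici a ⊆ s) (ht : Ici a ⊆ t) : s = t := by
  ext x
  rcases lt_or_ge x a with hx | hx
  · exact ⟨fun hxs => (h.subset ⟨hxs, hx⟩).1, fun hxt => (h.symm.subset ⟨hxt, hx⟩).1⟩
  · exact iff_of_true (hs hx) (ht hx)

lemma ncard_image_mul_Iio {m : ℕ} (hm : m ≠ 0) (k : ℕ) : ((· * m) '' Iio k).ncard = k := by
  rw [ncard_image_of_injective _ (mul_left_injective₀ hm), ← Finset.coe_range, ncard_coe_finset,
    Finset.card_range]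

lemma mult_le {S : Set ℕ} {x : ℕ} (hx : x ∈ S) (hx0 : x ≠ 0) : mult S ≤ x :=
  Nat.sInf_le ⟨hx, hx0⟩

lemma nsConductor_le {S : Set ℕ} {n : ℕ} (h : Ici n ⊆ S) : nsConductor S ≤ n :=
  Nat.sInf_le fun _ hx => h hx

lemma Ici_nsConductor_subset {S : Set ℕ} (hS : Sᶜ.Finite) : Ici (nsConductor S) ⊆ S := by
  obtain ⟨N, hN⟩ := hS.bddAbove
  have hne : ∃ n, ∀ x, n ≤ x → x ∈ S :=
    ⟨N + 1, fun x hx => by_contra fun hxS => by have := hN hxS; omega⟩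
  exact fun x hx => Nat.sInf_mem hne x hx

lemma nsConductor_eq {S : Set ℕ} {n : ℕ} (h : Ici n ⊆ S) (hn : ∀ x, x + 1 = n → x ∉ S) :
    nsConductor S = n :=
  le_antisymm (nsConductor_le h) <| le_csInf ⟨n, fun _ hx => h hx⟩ fun k hk => by
    by_contra hlt
    exact hn (n - 1) (by omega) (hk _ (by omega))

lemma nsDelta_eq_ncard_inter_Iio (S : Set ℕ) : nsDelta S = (S ∩ Iio (nsConductor S)).ncard := rfl

section wSemigroup

variable {m q : ℕ}

lemma wSemigroup_inter_Iio (hm : m ≠ 0) : wSemigroup m q ∩ Iio (q * m) = (· * m) '' Iio q := by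
  ext x
  simp only [wSemigroup, mem_inter_iff, mem_union, mem_ofPred_eq, mem_Iio, mem_image]
  constructor
  · rintro ⟨⟨i, -, rfl⟩ | hx, hxq⟩
    · exact ⟨i, (Nat.mul_lt_mul_right (Nat.pos_of_ne_zero hm)).mp hxq, rfl⟩
    · omega
  · rintro ⟨i, hi, rfl⟩
    exact ⟨Or.inl ⟨i, hi.le, rfl⟩, (Nat.mul_lt_mul_right (Nat.pos_of_ne_zero hm)).mpr hi⟩

lemma nsConductor_wSemigroup (hm : 1 < m) : nsConductor (wSemigroup m q) = q * m := by
  refine nsConductor_eq (fun _ hx => Or.inr hx) fun x hx hxW => ?_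
  rcases hxW with ⟨i, -, rfl⟩ | hqx
  · have : m ∣ 1 := (Nat.dvd_add_right (dvd_mul_left m i)).mp (hx ▸ dvd_mul_left m q)
    have := Nat.le_of_dvd one_pos this
    omega
  · exact absurd (show q * m ≤ x from hqx) (by omega)

lemma nsDelta_wSemigroup (hm : 1 < m) : nsDelta (wSemigroup m q) = q := by
  rw [nsDelta_eq_ncard_inter_Iio, nsConductor_wSemigroup hm, wSemigroup_inter_Iio (by omega),
    ncard_image_mul_Iio (by omega)]

end wSemigroup

namespace IsNumSgp

variable {S : Set ℕ} (hS : IsNumSgp S)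
include hS

lemma mult_mem_diff : mult S ∈ S \ {0} := by
  have hinf : S.Infinite := by simpa using hS.2.2.infinite_compl
  exact Nat.sInf_mem (hinf.sdiff (finite_singleton 0)).nonempty

lemma mult_pos : 0 < mult S :=
  Nat.pos_of_ne_zero hS.mult_mem_diff.2

lemma mul_mult_mem (i : ℕ) : i * mult S ∈ S := by
  induction i with
  | zero => simpa using hS.1
  | succ i ih => simpa [add_mul] using hS.2.1 _ ih _ hS.mult_mem_diff.1

lemma nsConductor_pos (hm : 1 < mult S) : 0 < nsConductor S := by
  by_contra h
  have := mult_le (Ici_nsConductor_subset hS.2.2 (by simp only [mem_Ici]; omega)) one_ne_zero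
  omega

lemma inter_Iio_nsConductor_eq (h : mult S * nsDelta S = nsConductor S) :
    S ∩ Iio (nsConductor S) = (· * mult S) '' Iio (nsDelta S) := by
  symm
  refine eq_of_subset_of_ncard_le ?_ ?_ ((finite_Iio _).inter_of_right S)
  · rintro _ ⟨i, hi, rfl⟩
    refine ⟨hS.mul_mult_mem i, ?_⟩
    rw [mem_Iio, ← h, mul_comm]
    exact (Nat.mul_lt_mul_right hS.mult_pos).mpr hi
  · rw [ncard_image_mul_Iio hS.mult_pos.ne', nsDelta_eq_ncard_inter_Iio]

lemma eq_wSemigroup_of_mult_mul_nsDelta_eq (h : mult S * nsDelta S = nsConductor S) :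
    S = wSemigroup (mult S) (nsDelta S) := by
  have hc : nsConductor S = nsDelta S * mult S := by rw [← h, mul_comm]
  refine eq_of_inter_Iio_eq_of_Ici_subset (a := nsConductor S) ?_
    (Ici_nsConductor_subset hS.2.2) (fun _ hx => Or.inr (hc ▸ hx))
  rw [hS.inter_Iio_nsConductor_eq h, hc, wSemigroup_inter_Iio hS.mult_pos.ne']

end IsNumSgp

theorem stmt6 (S : Set ℕ) (hS : IsNumSgp S) (hm : 1 < mult S) :
    mult S * nsDelta S = nsConductor S ↔
      ∃ q : ℕ, 0 < q ∧
        S = {n : ℕ | ∃ i ≤ q, n = i * mult S} ∪ {n : ℕ | q * mult S ≤ n} := by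
  constructor
  · intro h
    refine ⟨nsDelta S, Nat.pos_of_ne_zero fun hδ => ?_, hS.eq_wSemigroup_of_mult_mul_nsDelta_eq h⟩
    have := hS.nsConductor_pos hm
    rw [← h, hδ, mul_zero] at this
    exact this.false
  · rintro ⟨q, -, hSq⟩
    have hδ := nsDelta_wSemigroup (q := q) hm
    have hc := nsConductor_wSemigroup (q := q) hm
    rw [wSemigroup, ← hSq] at hδ hc
    rw [hδ, hc, mul_comm]
end

section
/- Let Γ be a numerical semigroup with multiplicity m and type t(Γ). If m·δ(Γ) = c(Γ), then t(Γ) = m − 1. -/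
theorem stmt7 (S : Set ℕ) (hS : IsNumSgp S)
    (h : mult S * nsDelta S = nsConductor S) :
    typ S = mult S - 1 := by
  obtain ⟨h0, hadd, hfin⟩ := hS
  set m := mult S with hm_def
  set c := nsConductor S with hc_def
  set d := nsDelta S with hd_def
  -- m ∈ S and m ≠ 0
  have hSinf : (S \ {0}).Nonempty := by
    have : Sᶜᶜ.Infinite := hfin.infinite_compl
    rw [compl_compl] at this
    exact (this.diff (Set.finite_singleton 0)).nonempty
  have hmmem := Nat.sInf_mem hSinf
  have hmS : m ∈ S := hmmem.1
  have hm0 : m ≠ 0 := hmmem.2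
  have hmle : ∀ u ∈ S, u ≠ 0 → m ≤ u := fun u hu hu0 => Nat.sInf_le ⟨hu, hu0⟩
  -- conductor property
  have hcmem : ∀ x, c ≤ x → x ∈ S := by
    have hne : {n : ℕ | ∀ x, n ≤ x → x ∈ S}.Nonempty := by
      obtain ⟨N, hN⟩ := hfin.bddAbove
      refine ⟨N + 1, fun x hx => ?_⟩
      by_contra hxS
      have := hN hxS
      omega
    exact Nat.sInf_mem hne
  -- multiples of m are in S
  have hmul : ∀ k : ℕ, k * m ∈ S := by
    intro k
    induction k with
    | zero => simpa using h0
    | succ n ih => have := hadd _ ih _ hmS; simpa [Nat.succ_mul] using this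
  have hcd : c = d * m := by rw [← h, Nat.mul_comm]
  -- the key structure result: S ∩ [0, c) = { k*m : k < d }
  have hkey : (fun k => k * m) '' Set.Iio d = {x | x ∈ S ∧ x < c} := by
    have hBA : (fun k => k * m) '' Set.Iio d ⊆ {x | x ∈ S ∧ x < c} := by
      rintro x ⟨k, hk, rfl⟩
      refine ⟨hmul k, ?_⟩
      show k * m < c
      have : k * m < d * m := (Nat.mul_lt_mul_right (Nat.pos_of_ne_zero hm0)).mpr hk
      omega
    have hAfin : {x | x ∈ S ∧ x < c}.Finite :=
      (Set.finite_Iio c).subset (fun x hx => hx.2)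
    have hcardB : ((fun k => k * m) '' Set.Iio d).ncard = d := by
      rw [Set.ncard_image_of_injective _ (fun a b hab => by
        exact Nat.eq_of_mul_eq_mul_right (Nat.pos_of_ne_zero hm0) hab)]
      rw [← Finset.coe_Iio, Set.ncard_coe_finset, Nat.card_Iio]
    have hcardA : {x | x ∈ S ∧ x < c}.ncard = d := rfl
    exact Set.eq_of_subset_of_ncard_le hBA (by rw [hcardA, hcardB]) hAfin
  have hlow : ∀ x ∈ S, x < c → ∃ k, k < d ∧ x = k * m := by
    intro x hx hxc
    have : x ∈ (fun k => k * m) '' Set.Iio d := by rw [hkey]; exact ⟨hx, hxc⟩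
    obtain ⟨k, hk, rfl⟩ := this
    exact ⟨k, hk, rfl⟩
  -- any apery element is < c + m
  have hapbd : ∀ w ∈ apery S m, w < c + m := by
    intro w hw
    by_contra hge
    push_neg at hge
    have hv : w - m ∈ S := hcmem _ (by omega)
    exact hw.2 _ hv (by omega)
  clear_value m c d
  -- the type set equals (c + ·) '' Ioo 0 m
  have hX : {w | w ∈ apery S m ∧ w ≠ 0 ∧
      ∀ w' ∈ apery S m, w' ≠ 0 → (∃ u ∈ S, w + u = w') → w' = w}
      = (fun r => c + r) '' Set.Ioo 0 m := by
    ext w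
    constructor
    · rintro ⟨hw, hw0, _⟩
      have hbd := hapbd w hw
      have hwc : c ≤ w := by
        by_contra hlt
        push_neg at hlt
        obtain ⟨k, hk, rfl⟩ := hlow w hw.1 hlt
        have hk0 : k ≠ 0 := by rintro rfl; simp at hw0
        refine hw.2 _ (hmul (k - 1)) ?_
        have : (k - 1) * m + m = k * m := by
          cases k with
          | zero => omega
          | succ n => simp [Nat.succ_mul]
        omega
      have hwne : w ≠ c := by
        rintro rfl
        have hd0 : d ≠ 0 := by rintro rfl; simp at hcd; omega
        refine hw.2 _ (hmul (d - 1)) ?_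
        have : (d - 1) * m + m = d * m := by
          cases d with
          | zero => omega
          | succ n => simp [Nat.succ_mul]
        omega
      refine ⟨w - c, ⟨by omega, by omega⟩, ?_⟩
      show c + (w - c) = w
      omega
    · rintro ⟨r, ⟨hr0, hrm⟩, hwr⟩
      change c + r = w at hwr
      subst hwr
      have hwS : c + r ∈ S := hcmem _ (by omega)
      have hap : c + r ∈ apery S m := by
        refine ⟨hwS, fun v hv hvm => ?_⟩
        have hvc : v < c := by omega
        obtain ⟨k, _, rfl⟩ := hlow v hv hvc
        have hdvd : m ∣ r := by
          have h1 : m ∣ k * m + m := Dvd.dvd.add (dvd_mul_left m k) dvd_rfl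
          have h2 : m ∣ c := ⟨d, by rw [hcd, Nat.mul_comm]⟩
          rw [hvm] at h1
          exact (Nat.dvd_add_right h2).mp h1
        have := Nat.le_of_dvd hr0 hdvd
        omega
      refine ⟨hap, by omega, fun w' hw' hw'0 ⟨u, hu, huw⟩ => ?_⟩
      have hbd := hapbd w' hw'
      rcases eq_or_ne u 0 with rfl | hu0
      · omega
      · have := hmle u hu hu0
        omega
  rw [typ, ← hm_def, hX, Set.ncard_image_of_injective _ (add_right_injective c),
    ← Finset.coe_Ioo, Set.ncard_coe_finset, Nat.card_Ioo]
  omega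
end

section
/- Let Γ be a numerical semigroup with embedding dimension e(Γ) ≥ 4. If there exists a gap g of Γ with W(g) ≥ 0, where W(g) = 2δ(Δ_g) − c(Δ_g) and Δ_g = Γ ∪ (g + Γ), then k·δ(Γ) − c(Γ) ≥ 0 for every k ≥ 4; in particular Γ satisfies Wilf's conjecture c(Γ) ≤ e(Γ)·δ(Γ). -/
lemma conductor_spec (S : Set ℕ) (h : Sᶜ.Finite) : ∀ x, nsConductor S ≤ x → x ∈ S := by
  have hne : {n : ℕ | ∀ x, n ≤ x → x ∈ S}.Nonempty := by
    obtain ⟨b, hb⟩ := h.bddAbove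
    refine ⟨b + 1, fun x hx => ?_⟩
    by_contra hxS
    exact absurd (hb hxS) (by omega)
  exact Nat.sInf_mem hne

lemma key_bound (S : Set ℕ) (hS : IsNumSgp S) (g : ℕ) (hg : g ∉ S)
    (hW : 0 ≤ 2 * (nsDelta (semimod S g) : ℤ) - (nsConductor (semimod S g) : ℤ)) :
    (nsConductor S : ℤ) ≤ 4 * (nsDelta S : ℤ) := by
  obtain ⟨h0, _hadd, hfin⟩ := hS
  classical
  set c := nsConductor S with hc
  set c' := nsConductor (semimod S g) with hc'
  have hg0 : 1 ≤ g := by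
    rcases Nat.eq_zero_or_pos g with h | h
    · exact absurd (h ▸ h0) hg
    · exact h
  have hraise : ∀ x, c ≤ x → x ∈ S := conductor_spec S hfin
  have hfin' : (semimod S g)ᶜ.Finite := by
    refine hfin.subset ?_
    intro x hx
    simp only [Set.mem_compl_iff, semimod, Set.mem_union] at hx ⊢
    exact fun h => hx (Or.inl h)
  have hraise' : ∀ x, c' ≤ x → x ∈ semimod S g := conductor_spec _ hfin'
  have hc'le : c' ≤ c := Nat.sInf_le (fun x hx => Or.inl (hraise x hx))
  set P : Set ℕ := {x | x ∈ S ∧ x < c'} with hP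
  set Aset : Set ℕ := {x | x ∈ S ∧ c' ≤ x ∧ x < c} with hAset
  set Q : Set ℕ := {x | x ∉ S ∧ c' ≤ x ∧ x < c} with hQ
  set B : Set ℕ := {x | x ∈ (fun y => g + y) '' S ∧ x < c' ∧ x ∉ S} with hB
  set Dset : Set ℕ := {x | x ∈ S ∧ x < c} with hD
  set B' : Set ℕ := {x | x ∉ S ∧ x ∈ (fun y => g + y) '' S ∧ x < c} with hB'
  have hIio : (Set.Iio c).Finite := Set.finite_Iio c
  have finP : P.Finite := hIio.subset (fun x hx => lt_of_lt_of_le hx.2 hc'le)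
  have finA : Aset.Finite := hIio.subset (fun x hx => hx.2.2)
  have finQ : Q.Finite := hIio.subset (fun x hx => hx.2.2)
  have finB : B.Finite := hIio.subset (fun x hx => lt_of_lt_of_le hx.2.1 hc'le)
  have finD : Dset.Finite := hIio.subset (fun x hx => hx.2)
  have finB' : B'.Finite := hIio.subset (fun x hx => hx.2.2)
  -- δ = p + a
  have hsplit : nsDelta S = P.ncard + Aset.ncard := by
    have hun : Dset = P ∪ Aset := by
      ext x
      simp only [hD, hP, hAset, Set.mem_setOf_eq, Set.mem_union]
      constructor
      · rintro ⟨hxS, hxc⟩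
        rcases lt_or_ge x c' with h | h
        · exact Or.inl ⟨hxS, h⟩
        · exact Or.inr ⟨hxS, h, hxc⟩
      · rintro (⟨hxS, h⟩ | ⟨hxS, h1, h2⟩)
        · exact ⟨hxS, lt_of_lt_of_le h hc'le⟩
        · exact ⟨hxS, h2⟩
    have hdisj : Disjoint P Aset := by
      rw [Set.disjoint_left]
      rintro x ⟨_, hx2⟩ ⟨_, hx3, _⟩
      omega
    show Dset.ncard = _
    rw [hun, Set.ncard_union_eq hdisj finP finA]
  -- a + q = c - c'
  have hAQ : Aset.ncard + Q.ncard = c - c' := by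
    have hun : Aset ∪ Q = Set.Ico c' c := by
      ext x
      simp only [hAset, hQ, Set.mem_union, Set.mem_setOf_eq, Set.mem_Ico]
      constructor
      · rintro (⟨_, h1, h2⟩ | ⟨_, h1, h2⟩) <;> exact ⟨h1, h2⟩
      · rintro ⟨h1, h2⟩
        by_cases hx : x ∈ S
        · exact Or.inl ⟨hx, h1, h2⟩
        · exact Or.inr ⟨hx, h1, h2⟩
    have hdisj : Disjoint Aset Q := by
      rw [Set.disjoint_left]
      rintro x ⟨hx1, _⟩ ⟨hx2, _⟩
      exact hx2 hx1
    rw [← Set.ncard_union_eq hdisj finA finQ, hun]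
    rw [show Set.Ico c' c = ↑(Finset.Ico c' c) by simp, Set.ncard_coe_finset,
      Nat.card_Ico]
  -- δ' ≤ p + b
  have hdelta' : nsDelta (semimod S g) ≤ P.ncard + B.ncard := by
    have hsub : {x | x ∈ semimod S g ∧ x < c'} ⊆ P ∪ B := by
      rintro x ⟨hxΔ, hxc⟩
      by_cases hx : x ∈ S
      · exact Or.inl ⟨hx, hxc⟩
      · rcases hxΔ with h | h
        · exact absurd h hx
        · exact Or.inr ⟨h, hxc, hx⟩
    calc nsDelta (semimod S g) ≤ (P ∪ B).ncard :=
          Set.ncard_le_ncard hsub ((finP.union finB))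
      _ ≤ P.ncard + B.ncard := Set.ncard_union_le _ _
  -- b + q ≤ |B'|
  have hBQ : B.ncard + Q.ncard ≤ B'.ncard := by
    have hsub : B ∪ Q ⊆ B' := by
      rintro x (⟨h1, h2, h3⟩ | ⟨h1, h2, h3⟩)
      · exact ⟨h3, h1, lt_of_lt_of_le h2 hc'le⟩
      · refine ⟨h1, ?_, h3⟩
        rcases hraise' x h2 with h | h
        · exact absurd h h1
        · exact h
    have hdisj : Disjoint B Q := by
      rw [Set.disjoint_left]
      rintro x ⟨_, hx2, _⟩ ⟨_, hx3, _⟩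
      omega
    rw [← Set.ncard_union_eq hdisj finB finQ]
    exact Set.ncard_le_ncard hsub finB'
  -- |B'| ≤ δ
  have hB'le : B'.ncard ≤ nsDelta S := by
    have hsub : B' ⊆ (fun y => g + y) '' Dset := by
      rintro x ⟨h1, ⟨s, hs, rfl⟩, h3⟩
      have h3' : g + s < c := h3
      exact ⟨s, ⟨hs, by omega⟩, rfl⟩
    calc B'.ncard ≤ ((fun y => g + y) '' Dset).ncard :=
          Set.ncard_le_ncard hsub (finD.image _)
      _ = Dset.ncard := Set.ncard_image_of_injective _ (add_right_injective g)
      _ = nsDelta S := rfl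
  -- arithmetic
  have hAQ2 : Aset.ncard + Q.ncard + c' = c := by rw [hAQ]; exact Nat.sub_add_cancel hc'le
  have e1 := hdelta'
  have e2 := hsplit
  have e3 := hBQ
  have e4 := hB'le
  zify at e1 e2 e3 e4 hAQ2 ⊢
  linarith [hW]

theorem stmt12 (S : Set ℕ) (hS : IsNumSgp S) (A : Finset ℕ) (hA : MinGens S A)
    (he : 4 ≤ A.card) (g : ℕ) (hg : g ∉ S)
    (hW : 0 ≤ 2 * (nsDelta (semimod S g) : ℤ) - (nsConductor (semimod S g) : ℤ)) :
    (∀ k : ℕ, 4 ≤ k → 0 ≤ (k : ℤ) * (nsDelta S : ℤ) - (nsConductor S : ℤ)) ∧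
    nsConductor S ≤ A.card * nsDelta S := by
  have hkey := key_bound S hS g hg hW
  constructor
  · intro k hk
    have h4 : (4 : ℤ) * (nsDelta S : ℤ) ≤ (k : ℤ) * (nsDelta S : ℤ) := by
      apply mul_le_mul_of_nonneg_right (by exact_mod_cast hk) (by positivity)
    linarith
  · have h4 : 4 * nsDelta S ≤ A.card * nsDelta S := Nat.mul_le_mul_right _ he
    have h1 : nsConductor S ≤ 4 * nsDelta S := by exact_mod_cast hkey
    exact h1.trans h4
end

section
/- If for every numerical semigroup Γ and every gap g of Γ the Wilf number satisfies W(g) ≥ −(e(Γ)δ(Γ) − c(Γ)), then every numerical semigroup satisfies Wilf's conjecture c(Γ) ≤ e(Γ)·δ(Γ). -/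
lemma ncard_Ico' (a b : ℕ) : (Set.Ico a b).ncard = b - a := by
  rw [← Nat.card_coe_set_eq, Nat.card_coe_set_eq, Set.ncard_eq_toFinset_card']
  simp

lemma cond_mem {T : Set ℕ} (hT : Tᶜ.Finite) : ∀ x, nsConductor T ≤ x → x ∈ T := by
  have hne : {n : ℕ | ∀ x, n ≤ x → x ∈ T}.Nonempty := by
    obtain ⟨N, hN⟩ := hT.bddAbove
    refine ⟨N + 1, fun x hx => ?_⟩
    by_contra hxT
    have := hN hxT
    omega
  exact Nat.sInf_mem hne

theorem stmt13
    (h : ∀ S : Set ℕ, IsNumSgp S → ∀ A : Finset ℕ, MinGens S A → ∀ g : ℕ, g ∉ S →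
      -((A.card : ℤ) * (nsDelta S : ℤ) - (nsConductor S : ℤ)) ≤
        2 * (nsDelta (semimod S g) : ℤ) - (nsConductor (semimod S g) : ℤ)) :
    ∀ S : Set ℕ, IsNumSgp S → ∀ A : Finset ℕ, MinGens S A →
      nsConductor S ≤ A.card * nsDelta S := by
  intro S hS A hA
  obtain ⟨h0, hadd, hfin⟩ := hS
  set c := nsConductor S with hc
  rcases Nat.eq_zero_or_pos c with hc0 | hc1
  · omega
  have hmemS : ∀ x, c ≤ x → x ∈ S := cond_mem hfin
  have hFS : (c - 1) ∉ S := by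
    intro hF
    have hle : c ≤ c - 1 := by
      rw [hc]
      apply Nat.sInf_le
      intro x hx
      rcases Nat.lt_or_ge x c with h1 | h2
      · have hxe : x = c - 1 := by omega
        exact hxe ▸ hF
      · exact hmemS x h2
    omega
  have hΔ : semimod S (c-1) = S ∪ {c - 1} := by
    ext x
    simp only [semimod, Set.mem_union, Set.mem_image, Set.mem_singleton_iff]
    constructor
    · rintro (hx | ⟨s, hs, rfl⟩)
      · exact Or.inl hx
      · rcases Nat.eq_zero_or_pos s with rfl | hspos
        · exact Or.inr (by omega)
        · exact Or.inl (hmemS _ (by omega))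
    · rintro (hx | rfl)
      · exact Or.inl hx
      · exact Or.inr ⟨0, h0, by omega⟩
  have hΔfin : (semimod S (c-1))ᶜ.Finite := by
    apply hfin.subset
    rw [hΔ]
    exact Set.compl_subset_compl.mpr Set.subset_union_left
  set cΔ := nsConductor (semimod S (c-1)) with hcd
  have hcΔle : cΔ ≤ c - 1 := by
    rw [hcd]
    apply Nat.sInf_le
    intro x hx
    rw [hΔ]
    rcases Nat.lt_or_ge x c with h1 | h2
    · exact Or.inr (Set.mem_singleton_iff.mpr (by omega))
    · exact Or.inl (hmemS x h2)
  set d := nsDelta S with hd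
  set dΔ := {x | x ∈ S ∧ x < cΔ}.ncard with hdd
  have hfin1 : {x | x ∈ S ∧ x < cΔ}.Finite :=
    (Set.finite_Iio cΔ).subset (fun x hx => hx.2)
  have hDfin : {x | x ∈ S ∧ x < c}.Finite :=
    (Set.finite_Iio c).subset (fun x hx => hx.2)
  have hDΔ : nsDelta (semimod S (c-1)) = dΔ := by
    rw [hdd]
    unfold nsDelta
    rw [← hcd]
    congr 1
    ext x
    simp only [Set.mem_setOf_eq, hΔ, Set.mem_union, Set.mem_singleton_iff]
    constructor
    · rintro ⟨h1 | h1, h2⟩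
      · exact ⟨h1, h2⟩
      · exact absurd h2 (by omega)
    · rintro ⟨h1, h2⟩
      exact ⟨Or.inl h1, h2⟩
  have hsub2 : {x | x ∈ S ∧ x < cΔ} ∪ Set.Ico cΔ (c-1) ⊆ {x | x ∈ S ∧ x < c} := by
    rintro x (⟨hxS, hx⟩ | hx)
    · exact ⟨hxS, by omega⟩
    · simp only [Set.mem_Ico] at hx
      have hxΔ : x ∈ semimod S (c-1) := cond_mem hΔfin x hx.1
      rw [hΔ] at hxΔ
      rcases hxΔ with h1 | h1
      · exact ⟨h1, by omega⟩
      · exact absurd (Set.mem_singleton_iff.mp h1) (by omega)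
  have hdisj : Disjoint {x | x ∈ S ∧ x < cΔ} (Set.Ico cΔ (c-1)) := by
    rw [Set.disjoint_left]
    rintro x ⟨_, hx⟩ hx2
    simp only [Set.mem_Ico] at hx2
    omega
  have hcard : dΔ + (c - 1 - cΔ) ≤ d := by
    have h1 : ({x | x ∈ S ∧ x < cΔ} ∪ Set.Ico cΔ (c-1)).ncard ≤ d :=
      Set.ncard_le_ncard hsub2 hDfin
    rwa [Set.ncard_union_eq hdisj hfin1 (Set.finite_Ico _ _), ncard_Ico'] at h1
  -- embedding dimension at least 2
  have he2 : 2 ≤ A.card := by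
    by_contra hlt
    push_neg at hlt
    have hcS : (c : ℕ) ∈ S := hmemS c le_rfl
    have hcS1 : (c + 1) ∈ S := hmemS (c+1) (by omega)
    rcases A.eq_empty_or_nonempty with rfl | hne
    · have := hA.1
      simp only [Finset.coe_empty, AddSubmonoid.closure_empty] at this
      rw [← this] at hcS
      simp only [AddSubmonoid.coe_bot, Set.mem_singleton_iff] at hcS
      omega
    · have hcard1 : A.card = 1 := by
        have := Finset.card_pos.mpr hne
        omega
      obtain ⟨a, rfl⟩ := Finset.card_eq_one.mp hcard1
      have hclo : (AddSubmonoid.closure ({a} : Set ℕ) : Set ℕ) = S := by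
        have := hA.1
        simpa using this
      have hmem : ∀ x, x ∈ S ↔ ∃ n : ℕ, n * a = x := by
        intro x
        rw [← hclo]
        rw [SetLike.mem_coe, AddSubmonoid.mem_closure_singleton]
        simp [nsmul_eq_mul]
      obtain ⟨n, hn⟩ := (hmem c).mp hcS
      obtain ⟨m, hm⟩ := (hmem (c+1)).mp hcS1
      have ha1 : a = 1 := by
        have hdvd1 : a ∣ c := ⟨n, by rw [← hn, mul_comm]⟩
        have hdvd2 : a ∣ c + 1 := ⟨m, by rw [← hm, mul_comm]⟩
        have h1 : a ∣ 1 := by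
          have := Nat.dvd_sub hdvd2 hdvd1
          simpa using this
        exact Nat.dvd_one.mp h1
      exact hFS ((hmem (c-1)).mpr ⟨c - 1, by rw [ha1, mul_one]⟩)
  -- apply the hypothesis
  have hkey := h S ⟨h0, hadd, hfin⟩ A hA (c-1) hFS
  rw [hDΔ, ← hcd, ← hc, ← hd] at hkey
  set t := A.card * d with ht
  have h2d : 2 * d ≤ t := by
    rw [ht]
    exact Nat.mul_le_mul_right d he2
  have hkey2 : (c : ℤ) - (t : ℤ) ≤ 2 * (dΔ : ℤ) - (cΔ : ℤ) := by
    push_cast [ht]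
    linarith [hkey]
  omega
end

section
/- Let Γ = ⟨α, β⟩ with gcd(α, β) = 1 and 3 ≤ α < β, let g = αβ − aα − bβ be a gap of Γ (1 ≤ a ≤ β−1, 1 ≤ b ≤ α−1), and let Δ = Γ ∪ (g + Γ). Then 3δ(Δ) − c(Δ) ≥ 0. -/
/-!
Write `c = (α - 1)(β - 1)` and `m = min (a α) (b β)`. The gaps of `Δ` are among the gaps of
`Γ` other than the `a b` gaps `g + i α + j β` (`i < a`, `j < b`), and `Γ` is symmetric
(`n ∉ Γ → c - 1 - n ∈ Γ`), so `Γ` has at most `c / 2` gaps and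
`δ(Δ) ≥ c(Δ) - c / 2 + a b`. Moreover `c - 1 - a α` and `c - 1 - b β` are gaps of `Δ`, so
`c(Δ) ≥ c - m`. Hence `2 (3 δ(Δ) - c(Δ)) ≥ c - 4 m + 6 a b`, which is nonnegative by an
elementary inequality that only needs `3 ≤ α, β` and `a α ≠ b β`.
-/

open Finset

def pairSemigroup (α β : ℕ) : Set ℕ := {n | ∃ x y : ℕ, n = x * α + y * β}

open Classical in
noncomputable def gapsBelow (D : Set ℕ) (N : ℕ) : Finset ℕ := (range N).filter (· ∉ D)

section Conductor

variable {D : Set ℕ} {N : ℕ}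

theorem nsConductor_le_s19 (hN : ∀ x, N ≤ x → x ∈ D) : nsConductor D ≤ N :=
  Nat.sInf_le hN

theorem lt_nsConductor_of_notMem (hN : ∀ x, N ≤ x → x ∈ D) {w : ℕ} (hw : w ∉ D) :
    w < nsConductor D :=
  lt_of_not_ge fun h => hw (Nat.sInf_mem (s := {n | ∀ x, n ≤ x → x ∈ D}) ⟨N, hN⟩ w h)

theorem nsDelta_add_card_gapsBelow (hN : ∀ x, N ≤ x → x ∈ D) :
    nsDelta D + #(gapsBelow D N) = nsConductor D := by
  classical
  set c := nsConductor D
  have hδ : nsDelta D = #((range c).filter (· ∈ D)) := by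
    rw [nsDelta, ← Set.ncard_coe_finset]
    congr 1
    ext x
    simp [c, and_comm]
  have hgaps : gapsBelow D N = (range c).filter (· ∉ D) := by
    ext x
    simp only [gapsBelow, mem_filter, mem_range]
    constructor
    · exact fun ⟨_, hx⟩ => ⟨lt_nsConductor_of_notMem hN hx, hx⟩
    · exact fun ⟨hxc, hx⟩ => ⟨hxc.trans_le (nsConductor_le_s19 hN), hx⟩
  rw [hδ, hgaps, card_filter_add_card_filter_not, card_range]

end Conductor

section PairSemigroup

variable {α β : ℕ}

theorem pairSemigroup_comm : pairSemigroup α β = pairSemigroup β α := by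
  ext n
  constructor <;> rintro ⟨x, y, rfl⟩ <;> exact ⟨y, x, add_comm _ _⟩

theorem mem_pairSemigroup_of_le (hco : Nat.Coprime α β) {n : ℕ}
    (hn : (α - 1) * (β - 1) ≤ n) :
    n ∈ pairSemigroup α β := by
  obtain ⟨x, y, h⟩ := Nat.exists_add_mul_eq_of_gcd_dvd_of_mul_pred_le α β n
    (by rw [hco]; exact one_dvd n) (by simpa [Nat.pred_eq_sub_one] using hn)
  exact ⟨x, y, h.symm⟩

theorem lt_of_notMem_pairSemigroup (hco : Nat.Coprime α β) {n : ℕ}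
    (hn : n ∉ pairSemigroup α β) : n < (α - 1) * (β - 1) :=
  lt_of_not_ge fun h => hn (mem_pairSemigroup_of_le hco h)

theorem notMem_pairSemigroup_of_add_eq (hco : Nat.Coprime α β) {n i j : ℕ} (hi : i ≠ 0)
    (hj : j ≠ 0) (h : n + i * α + j * β = α * β) : n ∉ pairSemigroup α β := by
  rintro ⟨x, y, rfl⟩
  exact hco.mul_add_mul_ne_mul (a := x + i) (b := y + j) (by omega) (by omega)
    (by rw [← h]; ring)

theorem eq_and_eq_of_mul_add_mul_eq (hco : Nat.Coprime α β) {i j i' j' : ℕ} (hj : j < α)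
    (hj' : j' < α) (h : i * α + j * β = i' * α + j' * β) : i = i' ∧ j = j' := by
  have hmod : j * β ≡ j' * β [MOD α] := by
    have := congrArg (· % α) h
    simpa only [Nat.ModEq, Nat.mul_add_mod_self_right] using this
  obtain rfl := (hmod.cancel_right_of_coprime hco).eq_of_lt_of_lt hj hj'
  exact ⟨Nat.eq_of_mul_eq_mul_right (by omega) (Nat.add_right_cancel h), rfl⟩

theorem exists_add_add_one_eq_of_notMem (hα : 0 < α) (hco : Nat.Coprime α β) {n : ℕ}
    (hn : n ∉ pairSemigroup α β) :
    ∃ m ∈ pairSemigroup α β, n + m + 1 = (α - 1) * (β - 1) := by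
  obtain ⟨y, hyα, hy⟩ := Nat.exists_mul_mod_eq_of_coprime n hco.symm hα.ne'
  have hmod : y * β ≡ n [MOD α] := by rw [mul_comm]; exact hy
  rcases le_or_gt (y * β) n with hle | hlt
  · obtain ⟨k, hk⟩ := (Nat.modEq_iff_dvd' hle).mp hmod
    exact absurd ⟨k, y, by rw [Nat.sub_eq_iff_eq_add hle] at hk; rw [hk]; ring⟩ hn
  · obtain ⟨k, hk⟩ := (Nat.modEq_iff_dvd' hlt.le).mp hmod.symm
    have hk1 : 1 ≤ k := Nat.pos_of_ne_zero (by rintro rfl; omega)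
    refine ⟨(k - 1) * α + (α - 1 - y) * β, ⟨k - 1, α - 1 - y, rfl⟩, ?_⟩
    have hβ : 1 ≤ β := Nat.pos_of_ne_zero (by rintro rfl; simp at hlt)
    zify [hk1, hlt.le, hβ, show y ≤ α - 1 by omega, show 1 ≤ α by omega] at hk ⊢
    linear_combination -hk

theorem two_mul_card_gapsBelow_le (hα : 0 < α) (hco : Nat.Coprime α β) :
    2 * #(gapsBelow (pairSemigroup α β) ((α - 1) * (β - 1))) ≤ (α - 1) * (β - 1) := by
  classical
  set c := (α - 1) * (β - 1)
  have hinj : #(gapsBelow (pairSemigroup α β) c) ≤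
      #((range c).filter (· ∈ pairSemigroup α β)) := by
    refine card_le_card_of_injOn (fun n => c - 1 - n) ?_ ?_
    · intro n hn
      simp only [gapsBelow, coe_filter, mem_range, Set.mem_ofPred_eq] at hn ⊢
      obtain ⟨m, hm, hnm⟩ := exists_add_add_one_eq_of_notMem hα hco hn.2
      exact ⟨by omega, by rwa [show c - 1 - n = m by omega]⟩
    · intro x hx y hy hxy
      simp only [gapsBelow, coe_filter, mem_range, Set.mem_ofPred_eq] at hx hy
      simp only at hxy
      omega
  have hsplit := card_filter_add_card_filter_not (s := range c) (· ∈ pairSemigroup α β)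
  rw [card_range] at hsplit
  unfold gapsBelow at hinj ⊢
  convert (by omega : 2 * #((range c).filter (· ∉ pairSemigroup α β)) ≤ c)

end PairSemigroup

section Semimodule

variable {α β a b g : ℕ}

-- `c - 1 - a α = α β - (a + 1) α - β` is a gap of `Δ`, and its difference with `g` is
-- `α β - α - (α + 1 - b) β`.
theorem le_nsConductor_semimod_add (hco : Nat.Coprime α β) (hb : b ≤ α)
    (hg : g + a * α + b * β = α * β) :
    (α - 1) * (β - 1) ≤ nsConductor (semimod (pairSemigroup α β) g) + a * α := by
  by_cases hc : (α - 1) * (β - 1) ≤ a * α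
  · exact le_add_left hc
  have hα : 1 ≤ α := Nat.pos_of_ne_zero (by rintro rfl; simp at hc)
  have hβ : 1 ≤ β := Nat.pos_of_ne_zero (by rintro rfl; simp at hc)
  obtain ⟨w, hw⟩ : ∃ w, w + 1 + a * α = (α - 1) * (β - 1) :=
    ⟨(α - 1) * (β - 1) - 1 - a * α, by omega⟩
  have hwα : w + (a + 1) * α + 1 * β = α * β := by
    zify [hα, hβ] at hw ⊢
    linear_combination hw
  have hwΔ : w ∉ semimod (pairSemigroup α β) g := by
    rintro (hwS | ⟨s, hs, rfl⟩)
    · exact notMem_pairSemigroup_of_add_eq hco (by omega) one_ne_zero hwα hwS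
    · refine notMem_pairSemigroup_of_add_eq hco one_ne_zero (j := α + 1 - b) (by omega) ?_ hs
      zify [show b ≤ α + 1 by omega] at hg hwα ⊢
      linear_combination hwα - hg
  have hN : ∀ x, (α - 1) * (β - 1) ≤ x → x ∈ semimod (pairSemigroup α β) g :=
    fun x hx => Or.inl (mem_pairSemigroup_of_le hco hx)
  have := lt_nsConductor_of_notMem hN hwΔ
  omega

-- The `a * b` elements `g + i α + j β` (`i < a`, `j < b`) are gaps of `⟨α, β⟩` in `Δ`.
theorem mul_add_card_gapsBelow_semimod_le (hco : Nat.Coprime α β) (hb : b ≤ α)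
    (hg : g + a * α + b * β = α * β) :
    a * b + #(gapsBelow (semimod (pairSemigroup α β) g) ((α - 1) * (β - 1))) ≤
      #(gapsBelow (pairSemigroup α β) ((α - 1) * (β - 1))) := by
  classical
  set c := (α - 1) * (β - 1)
  set T := (range a ×ˢ range b).image fun p : ℕ × ℕ => g + p.1 * α + p.2 * β
  have hT : #T = a * b := by
    rw [card_image_of_injOn, card_product, card_range, card_range]
    rintro ⟨i, j⟩ hij ⟨i', j'⟩ hij' h
    simp only [coe_product, coe_range, Set.mem_prod, Set.mem_Iio] at hij hij'
    have h' : i * α + j * β = i' * α + j' * β := by dsimp only at h; omega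
    obtain ⟨rfl, rfl⟩ :=
      eq_and_eq_of_mul_add_mul_eq hco (by omega : j < α) (by omega : j' < α) h'
    rfl
  have hTS : T ⊆ gapsBelow (pairSemigroup α β) c := by
    simp only [T, image_subset_iff, mem_product, mem_range]
    rintro ⟨i, j⟩ ⟨hi, hj⟩
    have hgap : g + i * α + j * β ∉ pairSemigroup α β :=
      notMem_pairSemigroup_of_add_eq hco (i := a - i) (j := b - j) (by omega) (by omega) (by
        zify [hi.le, hj.le] at hg ⊢
        linear_combination hg)
    simp only [gapsBelow, mem_filter, mem_range]
    exact ⟨lt_of_notMem_pairSemigroup hco hgap, hgap⟩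
  have hTΔ : Disjoint T (gapsBelow (semimod (pairSemigroup α β) g) c) := by
    simp only [T, disjoint_left, mem_image, mem_product, mem_range, gapsBelow, mem_filter]
    rintro _ ⟨⟨i, j⟩, -, rfl⟩ ⟨-, hΔ⟩
    exact hΔ (Or.inr ⟨i * α + j * β, ⟨i, j, rfl⟩, by ring⟩)
  have hΔS : gapsBelow (semimod (pairSemigroup α β) g) c ⊆ gapsBelow (pairSemigroup α β) c :=
    monotone_filter_right _ fun _ _ hx hxS => hx (Or.inl hxS)
  calc a * b + #(gapsBelow (semimod (pairSemigroup α β) g) c)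
      = #(T ∪ gapsBelow (semimod (pairSemigroup α β) g) c) := by
        rw [card_union_of_disjoint hTΔ, hT]
    _ ≤ _ := card_le_card (union_subset hTS hΔS)

end Semimodule

theorem four_mul_le_of_mul_lt {A B a b : ℕ} (hA : 3 ≤ A) (hB : 3 ≤ B) (h : a * A < b * B) :
    4 * (a * A) ≤ (A - 1) * (B - 1) + 6 * (a * b) := by
  zify [show 1 ≤ A by omega, show 1 ≤ B by omega] at h ⊢
  have hA' : (3 : ℤ) ≤ A := by exact_mod_cast hA
  have hB' : (3 : ℤ) ≤ B := by exact_mod_cast hB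
  have ha : (0 : ℤ) ≤ a := by positivity
  rcases le_or_gt (2 * (A : ℤ)) (3 * b) with hb | hb
  · nlinarith
  · -- Multiply by `A` and use `a A ≤ b B - 1`; what remains follows from `hq` (times `B ≥ 3`)
    -- and `t (t + 1) ≥ 0` for `t = A - 3 b`.
    have hq : 0 ≤ (A : ℤ) ^ 2 - A - 2 * b * (2 * A - 3 * b) := by
      nlinarith [sq_nonneg ((A : ℤ) - 3 * b)]
    have ht : 0 ≤ ((A : ℤ) - 3 * b) * (A - 3 * b + 1) := by
      rcases le_or_gt 0 ((A : ℤ) - 3 * b) with h' | h' <;> nlinarith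
    have key : 2 * (2 * A - 3 * b) * (b * B - 1) ≤ (A : ℤ) * ((A - 1) * (B - 1)) := by
      nlinarith [mul_nonneg (by linarith : (0 : ℤ) ≤ B - 3) hq]
    have : (A : ℤ) * (4 * (a * A)) ≤ A * ((A - 1) * (B - 1) + 6 * (a * b)) := by
      nlinarith [mul_le_mul_of_nonneg_left (by linarith : (a : ℤ) * A ≤ b * B - 1)
        (by linarith : (0 : ℤ) ≤ 2 * (2 * A - 3 * b))]
    exact le_of_mul_le_mul_left this (by linarith)

theorem stmt19_general (α β : ℕ) (hα : 3 ≤ α) (hαβ : α < β) (hco : Nat.Coprime α β)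
    (S : Set ℕ) (hSdef : S = {n : ℕ | ∃ x y : ℕ, n = x * α + y * β})
    (a b g : ℕ) (ha : 1 ≤ a ∧ a ≤ β - 1) (hb : 1 ≤ b ∧ b ≤ α - 1)
    (hgdef : (g : ℤ) = (α : ℤ) * β - a * α - b * β) :
    0 ≤ 3 * (nsDelta (semimod S g) : ℤ) - (nsConductor (semimod S g) : ℤ) := by
  obtain rfl : S = pairSemigroup α β := hSdef
  have hg : g + a * α + b * β = α * β := by zify; linarith
  have hδ := nsDelta_add_card_gapsBelow (N := (α - 1) * (β - 1))
    (D := semimod (pairSemigroup α β) g) fun x hx => Or.inl (mem_pairSemigroup_of_le hco hx)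
  have hgaps := mul_add_card_gapsBelow_semimod_le hco (by omega) hg
  have hsym := two_mul_card_gapsBelow_le (by omega) hco
  have hcα := le_nsConductor_semimod_add hco (by omega) hg
  have hcβ := le_nsConductor_semimod_add hco.symm (a := b) (b := a) (g := g) (by omega)
    (by linarith)
  rw [← pairSemigroup_comm, mul_comm (β - 1)] at hcβ
  have hne : a * α ≠ b * β := fun h => by
    have := eq_and_eq_of_mul_add_mul_eq hco (i := a) (j := 0) (i' := 0) (j' := b)
      (by omega) (by omega) (by simpa using h)
    omega
  rcases hne.lt_or_gt with h | h
  · have := four_mul_le_of_mul_lt hα (by omega) h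
    omega
  · have := four_mul_le_of_mul_lt (by omega) hα h
    rw [mul_comm (β - 1), mul_comm b a] at this
    omega

theorem stmt19 (α β : ℕ) (hα : 3 ≤ α) (hαβ : α < β) (hco : Nat.Coprime α β)
    (S : Set ℕ) (hSdef : S = {n : ℕ | ∃ x y : ℕ, n = x * α + y * β})
    (a b g : ℕ) (ha : 1 ≤ a ∧ a ≤ β - 1) (hb : 1 ≤ b ∧ b ≤ α - 1)
    (hgdef : (g : ℤ) = (α : ℤ) * β - a * α - b * β) (hg : g ∉ S) :
    0 ≤ 3 * (nsDelta (semimod S g) : ℤ) - (nsConductor (semimod S g) : ℤ) :=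
  stmt19_general α β hα hαβ hco S hSdef a b g ha hb hgdef
end
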